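/- The group presented by generators R₁, R₂, R₃ with the single relation R₁R₂R₃ = R₂R₃R₁ = R₃R₁R₂ is isomorphic to the direct product (F₂) × ℤ of a free group of rank 2 with ℤ, where the F₂ factor is generated by (the images of) R₂ and R₃ and the ℤ factor is generated by R₁R₂R₃. -/

import Mathlib

/-- The relations of the presentation
`⟨R₁, R₂, R₃ | R₁R₂R₃ = R₂R₃R₁ = R₃R₁R₂⟩` of `PBr₃`. -/
def pbr3Rels : Set (FreeGroup (Fin 3)) :=
  { FreeGroup.of 0 * FreeGroup.of 1 * FreeGroup.of 2 *
      (FreeGroup.of 1 * FreeGroup.of 2 * FreeGroup.of 0)⁻¹,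
    FreeGroup.of 0 * FreeGroup.of 1 * FreeGroup.of 2 *
      (FreeGroup.of 2 * FreeGroup.of 0 * FreeGroup.of 1)⁻¹ }

/-!
The two relations say that `Δ = R₁R₂R₃` commutes with `R₁` (as `R₁ · R₂R₃ = R₂R₃ · R₁`) and with
`R₃` (as `R₁R₂ · R₃ = R₃ · R₁R₂`), hence also with `R₂ = R₁⁻¹ Δ R₃⁻¹`; so `Δ` is central.
Eliminating `R₁ = Δ (R₂R₃)⁻¹` turns the presentation into `⟨R₂, R₃, Δ | Δ central⟩`, i.e.
`F₂ × ℤ`; concretely, both composites of the evident homomorphisms are the identity on generators.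
-/

section RotationInvariantProduct

variable {G : Type*} [Group G] {a b c : G}

theorem commute_mul_mul_self_left (h : a * b * c = b * c * a) : Commute (a * b * c) a := by
  have hbc : Commute a (b * c) := by simpa only [Commute, SemiconjBy, mul_assoc] using h
  simpa only [mul_assoc] using (Commute.refl a).mul_left hbc.symm

theorem commute_mul_mul_self_right (h : a * b * c = c * a * b) : Commute (a * b * c) c := by
  have hab : Commute (a * b) c := by simpa only [Commute, SemiconjBy, mul_assoc] using h
  exact hab.mul_left (Commute.refl c)

theorem commute_mul_mul_self_mid (h₁ : a * b * c = b * c * a) (h₂ : a * b * c = c * a * b) :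
    Commute (a * b * c) b := by
  have h := ((commute_mul_mul_self_left h₁).inv_right.mul_right (Commute.refl _)).mul_right
    (commute_mul_mul_self_right h₂).inv_right
  rwa [show a⁻¹ * (a * b * c) * c⁻¹ = b by group] at h

end RotationInvariantProduct

theorem PresentedGroup.commute_of_forall_commute_of {α : Type*} {rels : Set (FreeGroup α)}
    {z : PresentedGroup rels} (h : ∀ i, Commute z (of i)) (g : PresentedGroup rels) :
    Commute z g :=
  (Subgroup.mem_centralizer_singleton_iff.1 <|
    generated_by rels _ (fun i => Subgroup.mem_centralizer_singleton_iff.2 (h i).eq.symm) g).symm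

namespace PBr3

-- `R i` is the paper's `R_{i+1}`.
local notation "R" => PresentedGroup.of (rels := pbr3Rels)

theorem rotate_left : R 0 * R 1 * R 2 = R 1 * R 2 * R 0 :=
  PresentedGroup.mk_eq_mk_of_mul_inv_mem (Or.inl rfl)

theorem rotate_right : R 0 * R 1 * R 2 = R 2 * R 0 * R 1 :=
  PresentedGroup.mk_eq_mk_of_mul_inv_mem (Or.inr rfl)

theorem commute_twist (g : PresentedGroup pbr3Rels) : Commute (R 0 * R 1 * R 2) g := by
  refine PresentedGroup.commute_of_forall_commute_of (fun i => ?_) g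
  fin_cases i
  · exact commute_mul_mul_self_left rotate_left
  · exact commute_mul_mul_self_mid rotate_left rotate_right
  · exact commute_mul_mul_self_right rotate_right

-- `R₁ ↦ Δ (R₂R₃)⁻¹`, reading `Δ` as the generator of `ℤ`.
def genImage : Fin 3 → FreeGroup (Fin 2) × Multiplicative ℤ :=
  ![((FreeGroup.of 0 * FreeGroup.of 1)⁻¹, Multiplicative.ofAdd 1),
    (FreeGroup.of 0, 1), (FreeGroup.of 1, 1)]

theorem lift_genImage_rels : ∀ r ∈ pbr3Rels, FreeGroup.lift genImage r = 1 := by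
  rintro r (rfl | rfl) <;>
    · simp only [map_mul, map_inv, FreeGroup.lift_apply_of, genImage]
      ext <;> simp

def toProd : PresentedGroup pbr3Rels →* FreeGroup (Fin 2) × Multiplicative ℤ :=
  PresentedGroup.toGroup lift_genImage_rels

@[simp]
theorem toProd_of (i : Fin 3) : toProd (R i) = genImage i :=
  PresentedGroup.toGroup.of _

theorem toProd_twist : toProd (R 0 * R 1 * R 2) = (1, Multiplicative.ofAdd 1) := by
  simp only [map_mul, toProd_of, genImage]
  ext <;> simp

def ofProd : FreeGroup (Fin 2) × Multiplicative ℤ →* PresentedGroup pbr3Rels :=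
  (FreeGroup.lift ![R 1, R 2]).noncommCoprod (zpowersHom _ (R 0 * R 1 * R 2))
    fun _ n => show Commute _ (zpowersHom _ _ n) from (commute_twist _).symm.zpow_right _

theorem ofProd_comp_toProd : ofProd.comp toProd = MonoidHom.id _ := by
  have h₀ : ofProd (genImage 0) = (R 1 * R 2)⁻¹ * (R 0 * R 1 * R 2) := by
    simp [ofProd, genImage, MonoidHom.noncommCoprod_apply]
  refine PresentedGroup.ext fun i => ?_
  fin_cases i
  · show ofProd (toProd (R 0)) = R 0
    rw [toProd_of, h₀, rotate_left]
    group
  all_goals simp [ofProd, genImage, MonoidHom.noncommCoprod_apply]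

theorem toProd_comp_ofProd : toProd.comp ofProd = MonoidHom.id _ := by
  have hl : toProd.comp (FreeGroup.lift ![R 1, R 2]) = MonoidHom.inl _ _ :=
    FreeGroup.ext_hom _ _ fun j => by fin_cases j <;> simp [genImage]
  have hr : toProd.comp (zpowersHom _ (R 0 * R 1 * R 2)) = MonoidHom.inr _ _ :=
    MonoidHom.ext_mint (by simp [toProd_twist])
  simp only [ofProd, MonoidHom.comp_noncommCoprod, hl, hr, MonoidHom.noncommCoprod_inl_inr]

def equivFreeGroupProd : PresentedGroup pbr3Rels ≃* FreeGroup (Fin 2) × Multiplicative ℤ :=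
  MonoidHom.toMulEquiv toProd ofProd ofProd_comp_toProd toProd_comp_ofProd

end PBr3

/-- `⟨R₁, R₂, R₃ | R₁R₂R₃ = R₂R₃R₁ = R₃R₁R₂⟩ ≅ F₂ × ℤ`, with the `F₂` factor generated by
the images of `R₂` and `R₃`, and the `ℤ` factor generated by `R₁R₂R₃`. -/
theorem stmt_2 :
    ∃ e : PresentedGroup pbr3Rels ≃* FreeGroup (Fin 2) × Multiplicative ℤ,
      e (PresentedGroup.of 1) = (FreeGroup.of 0, 1) ∧
      e (PresentedGroup.of 2) = (FreeGroup.of 1, 1) ∧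
      e (PresentedGroup.of (rels := pbr3Rels) 0 * PresentedGroup.of 1 * PresentedGroup.of 2)
        = (1, Multiplicative.ofAdd 1) :=
  ⟨PBr3.equivFreeGroupProd, PBr3.toProd_of 1, PBr3.toProd_of 2, PBr3.toProd_twist⟩
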